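/- arXiv:2204.03033 — 4 statements merged into one kernel-verified Lean document; each statement's English description precedes it below -/
import Mathlib

section
/- The minimum number of occurrences of the simple transposition s_k = (k, k+1) among all reduced words of the longest permutation w_0 = n(n-1)...21 in the symmetric group S_n is min(k, n-k). -/
/-- The simple transposition `s_i = (i, i+1)` (1-indexed values) in `S_n`,
realized on `Fin n` (0-indexed positions `i-1` and `i`); junk value `1` otherwise. -/
def sgen (n i : ℕ) : Equiv.Perm (Fin n) :=
  if h : 0 < i ∧ i < n then Equiv.swap ⟨i - 1, by omega⟩ ⟨i, h.2⟩ else 1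

/-- `l` is a reduced word for `w ∈ S_n`: its product is `w` and it has minimal length. -/
def IsReducedWordFor (n : ℕ) (l : List ℕ) (w : Equiv.Perm (Fin n)) : Prop :=
  (l.map (sgen n)).prod = w ∧
    ∀ l' : List ℕ, (l'.map (sgen n)).prod = w → l.length ≤ l'.length

/-- The longest permutation `w_0 = n (n-1) ⋯ 2 1` of `S_n`. -/
def longestPerm (n : ℕ) : Equiv.Perm (Fin n) := Fin.revPerm

/-- `M(k,n)`: the maximum multiplicity of `s_k` among reduced words of `w_0 ∈ S_n`. -/
noncomputable def Mmax (k n : ℕ) : ℕ :=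
  sSup {N | ∃ l : List ℕ, IsReducedWordFor n l (longestPerm n) ∧ l.count k = N}

/-- Two finite sets are weakly separated. -/
def WeaklySeparated (I J : Finset ℕ) : Prop :=
  (∀ a ∈ I \ J, ∀ b ∈ J \ I, a < b) ∨ (∀ b ∈ J \ I, ∀ a ∈ I \ J, b < a)

/-- A monotone weakly separated path: pairwise weakly separated, and each step removes
one element `y` and adds one element `x > y`. -/
def IsMWSPath (P : List (Finset ℕ)) : Prop :=
  (∀ A ∈ P, ∀ B ∈ P, WeaklySeparated A B) ∧
    List.Chain' (fun A B => ∃ x y, y ∈ A ∧ x ∉ A ∧ y < x ∧ B = insert x (A.erase y)) P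

/-!
Read a word for `w` as a wiring diagram. Only the letter `s_k` carries a wire across the gap between
positions `k` and `k + 1`, one wire at a time, so every word for `w_0` contains `s_k` at least as
often as `w_0` has wires crossing that gap from left to right, namely `min k (n - k)` times.
Conversely, the standard word `s_1 (s_2 s_1) (s_3 s_2 s_1) ⋯ (s_{n-1} ⋯ s_1)` contains `s_k` exactly
`n - k` times, and its image under `s_i ↦ s_{n-i}` (conjugation by `w_0`) contains it `k` times.
Both are reduced: their length `n(n-1)/2` is the number of inversions of `w_0`, and each letter
creates at most one inversion.
-/

open Equiv Finset

lemma apply_prod_map_le_sum_map {α M : Type*} [Monoid M] (g : α → M) (f : M → ℕ) (c : α → ℕ)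
    (h_one : f 1 = 0) (h_mul : ∀ a x, f (g a * x) ≤ f x + c a) (l : List α) :
    f (l.map g).prod ≤ (l.map c).sum := by
  induction l with
  | nil => simpa using h_one.le
  | cons a l ih =>
    simp only [List.map_cons, List.prod_cons, List.sum_cons]
    linarith [h_mul a (l.map g).prod]

variable {n : ℕ}

lemma sgen_eq_one {i : ℕ} (h : ¬(0 < i ∧ i < n)) : sgen n i = 1 := dif_neg h

lemma sgen_apply_val {i : ℕ} (h0 : 0 < i) (hn : i < n) (x : Fin n) :
    (sgen n i x : ℕ) = if (x : ℕ) = i - 1 then i else if (x : ℕ) = i then i - 1 else x := by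
  rw [sgen, dif_pos ⟨h0, hn⟩, swap_apply_def]
  simp only [Fin.ext_iff]
  split_ifs <;> simp_all

def invSet (n : ℕ) (w : Perm (Fin n)) : Finset (Fin n × Fin n) :=
  {p | p.1 < p.2 ∧ w p.2 < w p.1}

lemma invSet_sgen_mul_subset {j : ℕ} (h0 : 0 < j) (hn : j < n) (w : Perm (Fin n)) :
    invSet n (sgen n j * w) ⊆ insert (w⁻¹ ⟨j - 1, by omega⟩, w⁻¹ ⟨j, hn⟩) (invSet n w) := by
  rintro ⟨p, q⟩ hpq
  obtain ⟨hpq, hinv⟩ := (mem_filter.1 hpq).2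
  dsimp only at hpq hinv
  have hne : (w p : ℕ) ≠ w q := fun h => hpq.ne (w.injective (Fin.ext h))
  rw [Perm.mul_apply, Perm.mul_apply, Fin.lt_def, sgen_apply_val h0 hn, sgen_apply_val h0 hn] at hinv
  simp only [invSet, mem_insert, mem_filter, mem_univ, true_and, Prod.mk.injEq,
    Perm.eq_inv_iff_eq, Fin.ext_iff, Fin.lt_def]
  split_ifs at hinv <;> omega

lemma card_invSet_sgen_mul_le (j : ℕ) (w : Perm (Fin n)) :
    #(invSet n (sgen n j * w)) ≤ #(invSet n w) + 1 := by
  by_cases hj : 0 < j ∧ j < n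
  · exact (card_le_card (invSet_sgen_mul_subset hj.1 hj.2 w)).trans (card_insert_le _ _)
  · simp [sgen_eq_one hj]

lemma invSet_one (n : ℕ) : invSet n 1 = ∅ :=
  filter_false_of_mem fun _ _ h => lt_asymm h.1 h.2

lemma card_invSet_prod_le_length (l : List ℕ) : #(invSet n (l.map (sgen n)).prod) ≤ l.length := by
  simpa using apply_prod_map_le_sum_map (sgen n) (fun w => #(invSet n w)) (fun _ => 1)
    (by simp [invSet_one]) card_invSet_sgen_mul_le l

lemma isReducedWordFor_of_length_eq {l : List ℕ} {w : Perm (Fin n)}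
    (h : (l.map (sgen n)).prod = w) (hl : l.length = #(invSet n w)) : IsReducedWordFor n l w :=
  ⟨h, fun l' h' => hl ▸ h' ▸ card_invSet_prod_le_length l'⟩

lemma card_invSet_longestPerm (n : ℕ) : #(invSet n (longestPerm n)) = ∑ i ∈ range n, i := by
  have : invSet n (longestPerm n) = ({p | p.1 < p.2} : Finset (Fin n × Fin n)) := by
    ext p
    simp [invSet, longestPerm]
  rw [this, card_filter, Fintype.sum_prod_type_right, ← Fin.sum_univ_eq_sum_range]
  refine sum_congr rfl fun j _ => ?_
  rw [← card_filter]
  simpa using (Fin.card_filter_val_lt (n := n) (m := j))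

/-- Positions left of the gap swapped by `sgen n k` (0-indexed `k - 1` and `k`) whose wire ends
right of it. -/
def crossSet (n k : ℕ) (w : Perm (Fin n)) : Finset (Fin n) :=
  {i | (i : ℕ) < k ∧ k ≤ w i}

lemma crossSet_sgen_mul_subset {j : ℕ} (h0 : 0 < j) (hn : j < n) (k : ℕ) (w : Perm (Fin n)) :
    crossSet n k (sgen n j * w) ⊆ insert (w⁻¹ ⟨j - 1, by omega⟩) (crossSet n k w) := by
  intro i hi
  obtain ⟨hik, hki⟩ := (mem_filter.1 hi).2
  rw [Perm.mul_apply, sgen_apply_val h0 hn] at hki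
  simp only [crossSet, mem_insert, mem_filter, mem_univ, true_and, Perm.eq_inv_iff_eq, Fin.ext_iff]
  split_ifs at hki <;> omega

lemma crossSet_sgen_mul_subset_of_ne {j k : ℕ} (h0 : 0 < j) (hn : j < n) (hjk : j ≠ k)
    (w : Perm (Fin n)) : crossSet n k (sgen n j * w) ⊆ crossSet n k w := by
  intro i hi
  obtain ⟨hik, hki⟩ := (mem_filter.1 hi).2
  rw [Perm.mul_apply, sgen_apply_val h0 hn] at hki
  simp only [crossSet, mem_filter, mem_univ, true_and]
  split_ifs at hki <;> omega

lemma card_crossSet_sgen_mul_le (k j : ℕ) (w : Perm (Fin n)) :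
    #(crossSet n k (sgen n j * w)) ≤ #(crossSet n k w) + if j = k then 1 else 0 := by
  by_cases hj : 0 < j ∧ j < n
  · split_ifs with hjk
    · exact (card_le_card (crossSet_sgen_mul_subset hj.1 hj.2 k w)).trans (card_insert_le _ _)
    · exact card_le_card (crossSet_sgen_mul_subset_of_ne hj.1 hj.2 hjk w)
  · simp [sgen_eq_one hj]

lemma crossSet_one (n k : ℕ) : crossSet n k 1 = ∅ :=
  filter_false_of_mem fun _ _ h => (h.1.trans_le h.2).false

lemma card_crossSet_prod_le_count (k : ℕ) (l : List ℕ) :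
    #(crossSet n k (l.map (sgen n)).prod) ≤ l.count k := by
  have hcount : (l.map fun j => if j = k then 1 else 0).sum = l.count k := by
    induction l with
    | nil => rfl
    | cons a l ih =>
      simp only [List.map_cons, List.sum_cons, ih, List.count_cons, beq_iff_eq]
      omega
  exact hcount ▸ apply_prod_map_le_sum_map (sgen n) (fun w => #(crossSet n k w)) _
    (by simp [crossSet_one]) (card_crossSet_sgen_mul_le k) l

lemma card_crossSet_longestPerm (n k : ℕ) : #(crossSet n k (longestPerm n)) = min k (n - k) := by
  have : crossSet n k (longestPerm n) = ({i | (i : ℕ) < min k (n - k)} : Finset (Fin n)) := by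
    ext i
    have := i.isLt
    simp only [crossSet, mem_filter, mem_univ, true_and, longestPerm, Fin.revPerm_apply,
      Fin.val_rev]
    omega
  rw [this, Fin.card_filter_val_lt]
  omega

def descWord : ℕ → List ℕ
  | 0 => []
  | m + 1 => (m + 1) :: descWord m

def longestWord : ℕ → List ℕ
  | 0 => []
  | m + 1 => longestWord m ++ descWord m

lemma descWord_prod_apply_val {j : ℕ} (hj : j < n) (x : Fin n) :
    (((descWord j).map (sgen n)).prod x : ℕ) =
      if (x : ℕ) = 0 then j else if (x : ℕ) ≤ j then x - 1 else x := by
  induction j with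
  | zero => simp only [descWord, List.map_nil, List.prod_nil, Perm.one_apply]; split_ifs <;> omega
  | succ j ih =>
    rw [descWord, List.map_cons, List.prod_cons, Perm.mul_apply,
      sgen_apply_val (by omega) hj, ih (by omega)]
    split_ifs <;> omega

lemma longestWord_prod_apply_val {j : ℕ} (hj : j ≤ n) (x : Fin n) :
    (((longestWord j).map (sgen n)).prod x : ℕ) = if (x : ℕ) < j then j - 1 - x else x := by
  induction j generalizing x with
  | zero => simp [longestWord]
  | succ j ih =>
    rw [longestWord, List.map_append, List.prod_append, Perm.mul_apply, ih (by omega)]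
    have := descWord_prod_apply_val (n := n) (j := j) (by omega) x
    split_ifs at this ⊢ <;> omega

lemma longestWord_prod (n : ℕ) : ((longestWord n).map (sgen n)).prod = longestPerm n := by
  ext x
  rw [longestWord_prod_apply_val le_rfl, if_pos x.isLt]
  simp only [longestPerm, Fin.revPerm_apply, Fin.val_rev]
  omega

lemma length_longestWord (n : ℕ) : (longestWord n).length = ∑ i ∈ range n, i := by
  have length_descWord (m : ℕ) : (descWord m).length = m := by
    induction m <;> simp_all [descWord]
  induction n <;> simp_all [longestWord, sum_range_succ]

lemma count_descWord {k : ℕ} (hk : 1 ≤ k) (m : ℕ) :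
    (descWord m).count k = if k ≤ m then 1 else 0 := by
  induction m with
  | zero => rw [descWord, List.count_nil, if_neg (by omega)]
  | succ m ih =>
    simp only [descWord, List.count_cons, ih, beq_iff_eq]
    split_ifs <;> omega

lemma count_longestWord {k : ℕ} (hk : 1 ≤ k) (n : ℕ) : (longestWord n).count k = n - k := by
  induction n with
  | zero => simp [longestWord]
  | succ n ih => rw [longestWord, List.count_append, ih, count_descWord hk]; split_ifs <;> omega

lemma isReducedWordFor_longestWord (n : ℕ) :
    IsReducedWordFor n (longestWord n) (longestPerm n) :=
  isReducedWordFor_of_length_eq (longestWord_prod n)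
    (by rw [length_longestWord, card_invSet_longestPerm])

lemma longestPerm_inv (n : ℕ) : (longestPerm n)⁻¹ = longestPerm n := Fin.revPerm_symm

lemma sgen_sub_eq_conj (n a : ℕ) :
    sgen n (n - a) = MulAut.conj (longestPerm n) (sgen n a) := by
  by_cases ha : 0 < a ∧ a < n
  · ext x
    rw [MulAut.conj_apply, Perm.mul_apply, Perm.mul_apply, sgen_apply_val (by omega) (by omega),
      longestPerm_inv, longestPerm, Fin.revPerm_apply, Fin.revPerm_apply, Fin.val_rev,
      sgen_apply_val ha.1 ha.2, Fin.val_rev]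
    have := x.isLt
    split_ifs <;> omega
  · rw [sgen_eq_one ha, sgen_eq_one (by omega), map_one]

def mirrorWord (n : ℕ) : List ℕ := (longestWord n).map (n - ·)

lemma mirrorWord_prod (n : ℕ) : ((mirrorWord n).map (sgen n)).prod = longestPerm n := by
  have : sgen n ∘ (n - ·) = MulAut.conj (longestPerm n) ∘ sgen n := funext (sgen_sub_eq_conj n)
  rw [mirrorWord, List.map_map, this, ← List.map_map, ← map_list_prod, longestWord_prod,
    MulAut.conj_apply, mul_inv_cancel_right]

lemma count_map_sub {k : ℕ} (hk1 : 1 ≤ k) (hk : k ≤ n) (l : List ℕ) :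
    (l.map (n - ·)).count k = l.count (n - k) := by
  simp only [List.count_eq_countP, List.countP_map]
  refine List.countP_congr fun a _ => ?_
  simp only [Function.comp_apply, beq_iff_eq]
  omega

lemma count_mirrorWord {k : ℕ} (hk1 : 1 ≤ k) (hk : k < n) : (mirrorWord n).count k = k := by
  rw [mirrorWord, count_map_sub hk1 hk.le, count_longestWord (by omega)]
  omega

lemma isReducedWordFor_mirrorWord (n : ℕ) :
    IsReducedWordFor n (mirrorWord n) (longestPerm n) :=
  isReducedWordFor_of_length_eq (mirrorWord_prod n)
    (by rw [mirrorWord, List.length_map, length_longestWord, card_invSet_longestPerm])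

lemma min_le_count_of_prod_eq_longestPerm (k : ℕ) {l : List ℕ}
    (hl : (l.map (sgen n)).prod = longestPerm n) : min k (n - k) ≤ l.count k := by
  have := card_crossSet_prod_le_count (n := n) k l
  rwa [hl, card_crossSet_longestPerm] at this

theorem stmt0_general (n k : ℕ) (hk1 : 1 ≤ k) :
    sInf {N | ∃ l : List ℕ, IsReducedWordFor n l (longestPerm n) ∧ l.count k = N} =
      min k (n - k) := by
  refine IsLeast.csInf_eq ⟨?_, ?_⟩
  · rcases le_total k (n - k) with h | h
    · exact ⟨mirrorWord n, isReducedWordFor_mirrorWord n,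
        by rw [count_mirrorWord hk1 (by omega), min_eq_left h]⟩
    · exact ⟨longestWord n, isReducedWordFor_longestWord n,
        by rw [count_longestWord hk1, min_eq_right h]⟩
  · rintro _ ⟨l, ⟨hl, -⟩, rfl⟩
    exact min_le_count_of_prod_eq_longestPerm k hl

/-- The minimum multiplicity of `s_k` in a reduced word of `w_0 ∈ S_n` is `min k (n-k)`. -/
theorem stmt0 (n k : ℕ) (hk1 : 1 ≤ k) (hk2 : k ≤ n - 1) :
    sInf {N | ∃ l : List ℕ, IsReducedWordFor n l (longestPerm n) ∧ l.count k = N} =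
      min k (n - k) :=
  stmt0_general n k hk1
end

section
/- For positive integers k < n <= m, M(k,n) + M(k,m) <= M(k,n+m), where M(k,n) is the maximum multiplicity of s_k in a reduced word of the longest element of S_n. -/
/-!
If `l₁` and `l₂` are reduced words of `w₀(n)` and `w₀(m)`, then `l₁ · u · l₂` is a word for
`w₀(n + m)`, where `u` is a word of length `n m` moving the first `m` points past the next `n`.
Its length `C(n,2) + n m + C(m,2) = C(n+m,2)` is the number of inversions of `w₀(n + m)`, and a
word cannot be shorter than the number of inversions of its product, since each letter creates
at most one. So the concatenation is reduced, and it contains `s_k` as often as `l₁` and `l₂`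
together.
-/

open Equiv Finset

def wordPerm (N : ℕ) (l : List ℕ) : Perm (Fin N) := (l.map (sgen N)).prod

@[simp] lemma wordPerm_nil (N : ℕ) : wordPerm N [] = 1 := rfl

@[simp] lemma wordPerm_cons (N a : ℕ) (l : List ℕ) :
    wordPerm N (a :: l) = sgen N a * wordPerm N l := by
  simp [wordPerm]

@[simp] lemma wordPerm_append (N : ℕ) (l₁ l₂ : List ℕ) :
    wordPerm N (l₁ ++ l₂) = wordPerm N l₁ * wordPerm N l₂ := by
  simp [wordPerm]

lemma sgen_of_not {N a : ℕ} (h : ¬(0 < a ∧ a < N)) : sgen N a = 1 := dif_neg h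

lemma sgen_apply_val_s3 {N a : ℕ} (h₀ : 0 < a) (hN : a < N) (x : Fin N) :
    (sgen N a x).1 = if x.1 = a - 1 then a else if x.1 = a then a - 1 else x.1 := by
  rw [sgen, dif_pos ⟨h₀, hN⟩, Equiv.swap_apply_def]
  simp only [Fin.ext_iff]
  split_ifs <;> simp_all

lemma longestPerm_apply_val (n : ℕ) (x : Fin n) : (longestPerm n x).1 = n - 1 - x.1 := by
  simp only [longestPerm, Fin.revPerm_apply, Fin.val_rev]
  omega

lemma wordPerm_apply_val_of_lt {N n : ℕ} (hn : n ≤ N) {l : List ℕ}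
    (hl : ∀ i ∈ l, 0 < i ∧ i < n) (x : Fin N) :
    (wordPerm N l x).1 = if h : x.1 < n then (wordPerm n l ⟨x.1, h⟩).1 else x.1 := by
  induction l with
  | nil => split_ifs <;> rfl
  | cons a l ih =>
    obtain ⟨ha₀, ha⟩ := hl a List.mem_cons_self
    simp only [wordPerm_cons, Perm.mul_apply]
    rw [sgen_apply_val_s3 ha₀ (by omega), ih fun i hi ↦ hl i (List.mem_cons_of_mem a hi)]
    by_cases hx : x.1 < n
    · simp only [dif_pos hx, sgen_apply_val_s3 ha₀ ha]
    · simp only [dif_neg hx]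
      split_ifs <;> omega

lemma wordPerm_apply_val_of_eq_longestPerm {N n : ℕ} (hn : n ≤ N) {l : List ℕ}
    (hl : ∀ i ∈ l, 0 < i ∧ i < n) (hw : wordPerm n l = longestPerm n) (x : Fin N) :
    (wordPerm N l x).1 = if x.1 < n then n - 1 - x.1 else x.1 := by
  rw [wordPerm_apply_val_of_lt hn hl, hw]
  split_ifs <;> simp only [longestPerm_apply_val]

lemma wordPerm_map_range_apply_val {N : ℕ} (a len : ℕ) (h : a + len < N) (x : Fin N) :
    (wordPerm N ((List.range len).map (a + 1 + ·)) x).1 =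
      if x.1 = a + len then a else if a ≤ x.1 ∧ x.1 < a + len then x.1 + 1 else x.1 := by
  induction len generalizing x with
  | zero =>
    simp only [List.range_zero, List.map_nil, wordPerm_nil, Perm.one_apply]
    split_ifs <;> omega
  | succ len ih =>
    simp only [List.range_succ, List.map_append, List.map_cons, List.map_nil, wordPerm_append,
      wordPerm_cons, wordPerm_nil, mul_one, Perm.mul_apply]
    rw [ih (by omega), sgen_apply_val_s3 (by omega) (by omega)]
    split_ifs <;> omega

/-- A word for the permutation of `Fin (r + m)` that moves the block `[0, m)` past the
block `[m, m + r)`. -/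
def shiftWord (m : ℕ) : ℕ → List ℕ
  | 0 => []
  | r + 1 => (List.range m).map (r + 1 + ·) ++ shiftWord m r

lemma length_shiftWord (m r : ℕ) : (shiftWord m r).length = r * m := by
  induction r with
  | zero => simp [shiftWord]
  | succ r ih =>
    simp only [shiftWord, List.length_append, List.length_map, List.length_range, ih]
    ring

lemma mem_shiftWord {m r i : ℕ} (hi : i ∈ shiftWord m r) : 0 < i ∧ i < r + m := by
  induction r with
  | zero => simp [shiftWord] at hi
  | succ r ih =>
    simp only [shiftWord, List.mem_append, List.mem_map, List.mem_range] at hi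
    rcases hi with ⟨t, ht, rfl⟩ | hi
    · omega
    · have := ih hi; omega

lemma wordPerm_shiftWord_apply_val {N : ℕ} (m r : ℕ) (h : r + m ≤ N) (x : Fin N) :
    (wordPerm N (shiftWord m r) x).1 =
      if x.1 < m then x.1 + r else if x.1 < m + r then x.1 - m else x.1 := by
  induction r generalizing x with
  | zero => simp only [shiftWord, wordPerm_nil, Perm.one_apply]; split_ifs <;> omega
  | succ r ih =>
    simp only [shiftWord, wordPerm_append, Perm.mul_apply]
    rw [wordPerm_map_range_apply_val r m (by omega), ih (by omega)]
    split_ifs <;> omega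

/-- `w₀(n + m) = w₀(n) · u · w₀(m)`, with both `w₀(n)` and `w₀(m)` acting on initial segments
of `Fin (n + m)`. -/
theorem wordPerm_append_shiftWord_append {n m : ℕ} {l₁ l₂ : List ℕ}
    (hl₁ : ∀ i ∈ l₁, 0 < i ∧ i < n) (hl₂ : ∀ i ∈ l₂, 0 < i ∧ i < m)
    (hw₁ : wordPerm n l₁ = longestPerm n) (hw₂ : wordPerm m l₂ = longestPerm m) :
    wordPerm (n + m) (l₁ ++ shiftWord m n ++ l₂) = longestPerm (n + m) := by
  ext x
  simp only [wordPerm_append, Perm.mul_apply, longestPerm_apply_val,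
    wordPerm_apply_val_of_eq_longestPerm (Nat.le_add_right n m) hl₁ hw₁,
    wordPerm_apply_val_of_eq_longestPerm (Nat.le_add_left m n) hl₂ hw₂,
    wordPerm_shiftWord_apply_val m n le_rfl]
  split_ifs <;> omega

lemma exists_wordPerm_eq_longestPerm (n : ℕ) : ∃ l : List ℕ,
    (∀ i ∈ l, 0 < i ∧ i < n) ∧ wordPerm n l = longestPerm n ∧ l.length = n.choose 2 := by
  induction n with
  | zero => exact ⟨[], by simp, Subsingleton.elim _ _, rfl⟩
  | succ n ih =>
    obtain ⟨l, hl, hw, hlen⟩ := ih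
    refine ⟨l ++ shiftWord 1 n ++ [], fun i hi ↦ ?_,
      wordPerm_append_shiftWord_append hl (by simp) hw (Subsingleton.elim _ _), ?_⟩
    · simp only [List.append_nil, List.mem_append] at hi
      rcases hi with hi | hi
      · have := hl i hi; omega
      · exact mem_shiftWord hi
    · simp [length_shiftWord, hlen, Nat.choose_succ_succ', add_comm]

def inversions {N : ℕ} (w : Perm (Fin N)) : Finset (Fin N × Fin N) :=
  {p | p.1 < p.2 ∧ w p.2 < w p.1}

@[simp] lemma mem_inversions {N : ℕ} {w : Perm (Fin N)} {p : Fin N × Fin N} :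
    p ∈ inversions w ↔ p.1 < p.2 ∧ w p.2 < w p.1 := by
  simp [inversions]

lemma inversions_one (N : ℕ) : inversions (1 : Perm (Fin N)) = ∅ := by
  ext p
  simp only [mem_inversions, Perm.one_apply, notMem_empty, iff_false]
  exact fun h ↦ h.1.asymm h.2

lemma inversions_sgen_mul_subset {N a : ℕ} (h : 0 < a ∧ a < N) (w : Perm (Fin N)) :
    inversions (sgen N a * w) ⊆ insert (w⁻¹ ⟨a - 1, by omega⟩, w⁻¹ ⟨a, h.2⟩) (inversions w) := by
  rintro ⟨i, j⟩ hp
  simp only [mem_inversions, Perm.mul_apply] at hp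
  obtain ⟨hij, hlt⟩ := hp
  simp only [mem_insert, mem_inversions, Prod.ext_iff, Perm.eq_inv_iff_eq, Fin.ext_iff]
  by_cases hex : (w i).1 = a - 1 ∧ (w j).1 = a
  · exact Or.inl hex
  · have hne : (w i).1 ≠ (w j).1 := fun h ↦ hij.ne (w.injective (Fin.ext h))
    rw [Fin.lt_def, sgen_apply_val_s3 h.1 h.2, sgen_apply_val_s3 h.1 h.2] at hlt
    refine Or.inr ⟨hij, Fin.lt_def.2 ?_⟩
    split_ifs at hlt <;> omega

lemma card_inversions_wordPerm_le (N : ℕ) (l : List ℕ) :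
    #(inversions (wordPerm N l)) ≤ l.length := by
  induction l with
  | nil => simp [inversions_one]
  | cons a l ih =>
    rw [wordPerm_cons, List.length_cons]
    by_cases h : 0 < a ∧ a < N
    · calc #(inversions (sgen N a * wordPerm N l))
          ≤ #(insert _ (inversions (wordPerm N l))) := card_le_card (inversions_sgen_mul_subset h _)
        _ ≤ #(inversions (wordPerm N l)) + 1 := card_insert_le _ _
        _ ≤ l.length + 1 := by omega
    · rw [sgen_of_not h, one_mul]
      omega

lemma card_inversions_longestPerm (N : ℕ) : #(inversions (longestPerm N)) = N.choose 2 := by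
  have hpairs := Fintype.card_product_filter_lt (α := Fin N)
  rw [Fintype.card_fin] at hpairs
  rw [← hpairs]
  congr 1
  ext p
  simp [longestPerm]

lemma choose_two_add (n m : ℕ) : (n + m).choose 2 = n.choose 2 + n * m + m.choose 2 := by
  induction m with
  | zero => simp
  | succ m ih =>
    rw [← add_assoc, Nat.choose_succ_succ', ih, Nat.choose_succ_succ', Nat.choose_one_right,
      Nat.choose_one_right]
    ring

lemma isReducedWordFor_longestPerm_of_length {n : ℕ} {l : List ℕ}
    (hw : wordPerm n l = longestPerm n) (hlen : l.length = n.choose 2) :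
    IsReducedWordFor n l (longestPerm n) := by
  refine ⟨hw, fun l' hl' ↦ ?_⟩
  have := card_inversions_wordPerm_le n l'
  rwa [wordPerm, hl', card_inversions_longestPerm, ← hlen] at this

namespace IsReducedWordFor

variable {n : ℕ} {l : List ℕ}

lemma bounds_of_mem {w : Perm (Fin n)} (h : IsReducedWordFor n l w) {i : ℕ} (hi : i ∈ l) :
    0 < i ∧ i < n := by
  by_contra hbad
  obtain ⟨s, t, rfl⟩ := List.append_of_mem hi
  have hshorter := h.2 (s ++ t) <| by
    simpa [wordPerm, sgen_of_not hbad] using h.1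
  simp at hshorter

lemma length_eq_choose_two (h : IsReducedWordFor n l (longestPerm n)) :
    l.length = n.choose 2 := by
  obtain ⟨l', -, hw', hlen'⟩ := exists_wordPerm_eq_longestPerm n
  have := card_inversions_wordPerm_le n l
  rw [wordPerm, h.1, card_inversions_longestPerm] at this
  exact le_antisymm (hlen' ▸ h.2 l' hw') this

lemma append_shiftWord_append {m : ℕ} {l₁ l₂ : List ℕ}
    (h₁ : IsReducedWordFor n l₁ (longestPerm n)) (h₂ : IsReducedWordFor m l₂ (longestPerm m)) :
    IsReducedWordFor (n + m) (l₁ ++ shiftWord m n ++ l₂) (longestPerm (n + m)) := by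
  refine isReducedWordFor_longestPerm_of_length (wordPerm_append_shiftWord_append
    (fun _ ↦ h₁.bounds_of_mem) (fun _ ↦ h₂.bounds_of_mem) h₁.1 h₂.1) ?_
  simp only [List.length_append, h₁.length_eq_choose_two, h₂.length_eq_choose_two,
    length_shiftWord, choose_two_add]

end IsReducedWordFor

lemma bddAbove_setOf_count (k n : ℕ) :
    BddAbove {N | ∃ l : List ℕ, IsReducedWordFor n l (longestPerm n) ∧ l.count k = N} := by
  refine ⟨n.choose 2, ?_⟩
  rintro _ ⟨l, h, rfl⟩
  exact h.length_eq_choose_two ▸ List.count_le_length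

lemma IsReducedWordFor.count_le_Mmax {n : ℕ} {l : List ℕ}
    (h : IsReducedWordFor n l (longestPerm n)) (k : ℕ) : l.count k ≤ Mmax k n :=
  le_csSup (bddAbove_setOf_count k n) ⟨l, h, rfl⟩

lemma exists_isReducedWordFor_count_eq_Mmax (k n : ℕ) :
    ∃ l, IsReducedWordFor n l (longestPerm n) ∧ l.count k = Mmax k n := by
  obtain ⟨l, -, hw, hlen⟩ := exists_wordPerm_eq_longestPerm n
  have hne : {N | ∃ l : List ℕ, IsReducedWordFor n l (longestPerm n) ∧ l.count k = N}.Nonempty :=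
    ⟨_, l, isReducedWordFor_longestPerm_of_length hw hlen, rfl⟩
  exact Nat.sSup_mem hne (bddAbove_setOf_count k n)

theorem stmt3_general (k n m : ℕ) :
    Mmax k n + Mmax k m ≤ Mmax k (n + m) := by
  obtain ⟨l₁, h₁, hc₁⟩ := exists_isReducedWordFor_count_eq_Mmax k n
  obtain ⟨l₂, h₂, hc₂⟩ := exists_isReducedWordFor_count_eq_Mmax k m
  calc Mmax k n + Mmax k m ≤ (l₁ ++ shiftWord m n ++ l₂).count k := by
        simp only [List.count_append, ← hc₁, ← hc₂]; omega
    _ ≤ Mmax k (n + m) := (h₁.append_shiftWord_append h₂).count_le_Mmax k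

theorem stmt3 (k n m : ℕ) (hk : 0 < k) (hkn : k < n) (hnm : n ≤ m) :
    Mmax k n + Mmax k m ≤ Mmax k (n + m) :=
  stmt3_general k n m
end

section
/- Let (C_1, ..., C_N) be the sequence of pairs C_j = (A_j \ A_{j-1}) ∪ (A_{j-1} \ A_j) arising from a monotone weakly separated path (A_0,...,A_N) of 3-element sets. If C_j = {a,b} and C_{j+1} = {c,d} with a < b and c < d, then one of the following holds: a < b = c < d, c < d = a < b, a < c < b < d, c < a < d < b, a < c < d < b, or c < a < b < d. In particular, a ≠ c, b ≠ d, and neither b < c nor d < a. -/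
lemma chain'_of_getElem? {α : Type*} {R : α → α → Prop} :
    ∀ {l : List α} (_ : List.Chain' R l) {i : ℕ} {x y : α},
      l[i]? = some x → l[i + 1]? = some y → R x y
  | [], _, i, x, y, hx, _ => by simp at hx
  | [a], _, 0, x, y, _, hy => by simp at hy
  | a :: b :: t, h, 0, x, y, hx, hy => by
      simp only [List.getElem?_cons_zero, List.getElem?_cons_succ, Option.some_inj] at hx hy
      subst hx; subst hy
      exact (List.isChain_cons_cons.mp h).1
  | a :: t, h, i + 1, x, y, hx, hy => by
      rw [List.getElem?_cons_succ] at hx hy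
      exact chain'_of_getElem? h.tail hx hy

lemma step_eq {A B : Finset ℕ} {x y a b : ℕ} (hy : y ∈ A) (hx : x ∉ A)
    (hyx : y < x) (hB : B = insert x (A.erase y)) (hab : a < b)
    (hU : (A \ B) ∪ (B \ A) = {a, b}) : a = y ∧ b = x := by
  have h1 : (A \ B) ∪ (B \ A) = {y, x} := by
    subst hB
    ext z
    simp only [Finset.mem_union, Finset.mem_sdiff, Finset.mem_insert, Finset.mem_erase,
      Finset.mem_singleton]
    constructor
    · rintro (⟨hzA, hz⟩ | ⟨hz, hzA⟩)
      · left; by_contra hzy; exact hz (Or.inr ⟨hzy, hzA⟩)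
      · rcases hz with rfl | ⟨_, h⟩
        · exact Or.inr rfl
        · exact absurd h hzA
    · rintro (rfl | rfl)
      · exact Or.inl ⟨hy, fun h => by rcases h with rfl | ⟨h, _⟩; exacts [hx hy, h rfl]⟩
      · exact Or.inr ⟨Or.inl rfl, hx⟩
  rw [h1] at hU
  have ha : a ∈ ({y, x} : Finset ℕ) := hU ▸ Finset.mem_insert_self a {b}
  have hb : b ∈ ({y, x} : Finset ℕ) := hU ▸ Finset.mem_insert_of_mem (Finset.mem_singleton_self b)
  have hy2 : y ∈ ({a, b} : Finset ℕ) := hU ▸ Finset.mem_insert_self y {x}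
  simp only [Finset.mem_insert, Finset.mem_singleton] at ha hb hy2
  omega

theorem stmt17 (P : List (Finset ℕ)) (hP : IsMWSPath P) (hcard : ∀ A ∈ P, A.card = 3)
    (j : ℕ) (A B C : Finset ℕ)
    (hA : P[j]? = some A) (hB : P[j + 1]? = some B) (hC : P[j + 2]? = some C)
    (a b c d : ℕ) (hab : a < b) (hcd : c < d)
    (hCj : (A \ B) ∪ (B \ A) = {a, b}) (hCj1 : (B \ C) ∪ (C \ B) = {c, d}) :
    (a < b ∧ b = c ∧ c < d) ∨ (c < d ∧ d = a ∧ a < b) ∨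
    (a < c ∧ c < b ∧ b < d) ∨ (c < a ∧ a < d ∧ d < b) ∨
    (a < c ∧ c < d ∧ d < b) ∨ (c < a ∧ a < b ∧ b < d) := by
  obtain ⟨x1, y1, hy1, hx1, hyx1, hB1⟩ := chain'_of_getElem? hP.2 hA hB
  obtain ⟨x2, y2, hy2, hx2, hyx2, hC1⟩ := chain'_of_getElem? hP.2 hB hC
  obtain ⟨rfl, rfl⟩ := step_eq hy1 hx1 hyx1 hB1 hab hCj
  obtain ⟨rfl, rfl⟩ := step_eq hy2 hx2 hyx2 hC1 hcd hCj1
  -- now: a ∈ A, b ∉ A, B = insert b (A.erase a), c ∈ B, d ∉ B, C = insert d (B.erase c)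
  have haB : a ∉ B := by
    rw [hB1]; simp only [Finset.mem_insert, Finset.mem_erase]
    rintro (rfl | ⟨h, _⟩); exacts [hx1 hy1, h rfl]
  have hbB : b ∈ B := by rw [hB1]; exact Finset.mem_insert_self _ _
  have hac : a ≠ c := fun h => haB (h ▸ hy2)
  have hbd : b ≠ d := fun h => hx2 (h ▸ hbB)
  by_cases hbc : b = c
  · exact Or.inl ⟨hab, hbc, hcd⟩
  by_cases hda : d = a
  · exact Or.inr (Or.inl ⟨hcd, hda, hab⟩)
  -- c ∈ A, d ∉ A
  have hcA : c ∈ A := by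
    have := hy2; rw [hB1] at this
    rcases Finset.mem_insert.mp this with h | h
    · exact absurd h.symm hbc
    · exact (Finset.mem_erase.mp h).2
  have hdA : d ∉ A := fun h => hx2 (hB1 ▸ Finset.mem_insert_of_mem
    (Finset.mem_erase.mpr ⟨hda, h⟩))
  -- memberships in C
  have hdC : d ∈ C := by rw [hC1]; exact Finset.mem_insert_self _ _
  have hbC : b ∈ C := by
    rw [hC1]; exact Finset.mem_insert_of_mem (Finset.mem_erase.mpr ⟨hbc, hbB⟩)
  have haC : a ∉ C := by
    rw [hC1]; simp only [Finset.mem_insert, Finset.mem_erase]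
    rintro (rfl | ⟨_, h⟩); exacts [hda rfl, haB h]
  have hcC : c ∉ C := by
    rw [hC1]; simp only [Finset.mem_insert, Finset.mem_erase]
    rintro (rfl | ⟨h, _⟩); exacts [absurd rfl hcd.ne, h rfl]
  -- weak separation of A and C
  have hAP : A ∈ P := List.mem_of_getElem? hA
  have hCP : C ∈ P := List.mem_of_getElem? hC
  have hWS := hP.1 A hAP C hCP
  have haAC : a ∈ A \ C := Finset.mem_sdiff.mpr ⟨hy1, haC⟩
  have hcAC : c ∈ A \ C := Finset.mem_sdiff.mpr ⟨hcA, hcC⟩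
  have hbCA : b ∈ C \ A := Finset.mem_sdiff.mpr ⟨hbC, hx1⟩
  have hdCA : d ∈ C \ A := Finset.mem_sdiff.mpr ⟨hdC, hdA⟩
  rcases hWS with h | h
  · have h1 := h c hcAC b hbCA
    have h2 := h a haAC d hdCA
    omega
  · have h1 := h b hbCA a haAC
    omega
end

section
/- For any finite Coxeter group W with generators S and any s_i in S, the minimum number of occurrences of s_i among all reduced words of an element w equals the number k of steps taken by the following algorithm to reach the identity: set w^{(0)} = w^{J_i} (the minimal coset representative of w modulo the parabolic subgroup W_{J_i} with J_i = S \ {s_i}), and for each step set w^{(k+1)} = (w^{(k)} s_i)^{J_i} while w^{(k)} ≠ id. -/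
/-- `u` is the minimal-length representative of the coset `w · W_J`, where
`J = S \ {sᵢ}` is the set of simple reflections other than `sᵢ`. -/
def IsMinCosetRep {B : Type*} {W : Type*} [Group W] {M : CoxeterMatrix B}
    (cs : CoxeterSystem M W) (i : B) (w u : W) : Prop :=
  (∃ v ∈ Subgroup.closure (cs.simple '' {j | j ≠ i}), u = w * v) ∧
    ∀ u' : W, (∃ v ∈ Subgroup.closure (cs.simple '' {j | j ≠ i}), u' = w * v) →
      cs.length u ≤ cs.length u'

/-!
Write `m(w)` for the least number of letters `i` in a reduced word for `w`. By the deletion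
property every word for `w` has a reduced subword for `w`, so `m(w)` is also the least number of
letters `i` in an arbitrary word for `w`. Hence `m` is subadditive, vanishes exactly on
`W_J = ⟨S \ {sᵢ}⟩`, and is constant on the cosets `w W_J`. A minimal coset representative
`u ≠ 1` has `sᵢ` as its only right descent, so each reduced word for `u` ends in `i` and
`m(u sᵢ) = m(u) - 1`. So `m` drops by exactly one at each step of the algorithm, and the only
minimal coset representative with `m = 0` is the identity.

The deletion property comes from the exchange condition, proved with the usual permutation
representation of `W` on `W × ZMod 2`: it makes the parity of the number of occurrences of a
reflection `t` in the left inversion sequence of a word depend only on the element the word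
represents.
-/

open List

theorem List.count_map_conj {G : Type*} [Group G] [DecidableEq G] (g t : G) (l : List G) :
    (l.map (MulAut.conj g)).count t = l.count (g⁻¹ * t * g) := by
  conv_lhs => rw [show t = MulAut.conj g (g⁻¹ * t * g) by simp [mul_assoc]]
  exact count_map_of_injective _ _ (MulAut.conj g).injective _

namespace CoxeterSystem

variable {B : Type*} {W : Type*} [Group W] {M : CoxeterMatrix B} (cs : CoxeterSystem M W)

local prefix:100 "π" => cs.wordProd
local prefix:100 "lis" => cs.leftInvSeq

theorem simple_mul_mul_simple_eq_simple_iff (i : B) (t : W) :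
    cs.simple i * t * cs.simple i = cs.simple i ↔ t = cs.simple i := by
  rw [mul_eq_right, mul_eq_one_iff_eq_inv', inv_simple, eq_comm]

theorem wordProd_alternatingWord_two_mul_add_one (i j : B) (k : ℕ) :
    π (alternatingWord i j (2 * k + 1)) = cs.simple j * (cs.simple i * cs.simple j) ^ k := by
  rw [prod_alternatingWord_eq_mul_pow]
  simp [Nat.not_even_bit1, Nat.mul_add_div]

theorem leftInvSeq_alternatingWord_two_mul (i j : B) (p : ℕ) :
    lis (alternatingWord j i (2 * p)) =
      (range (2 * p)).map fun k => cs.simple j * (cs.simple i * cs.simple j) ^ k := by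
  refine ext_getElem (by simp) fun k hk _ => ?_
  rw [getElem_leftInvSeq_alternatingWord cs j i p k (by simpa using hk), getElem_map,
    getElem_range, wordProd_alternatingWord_two_mul_add_one]

theorem reverse_map_alternatingWord_two_mul_prod {G : Type*} [Monoid G] (f : B → G) (i j : B)
    (p : ℕ) : ((alternatingWord j i (2 * p)).map f).reverse.prod = (f i * f j) ^ p := by
  induction p with
  | zero => simp [alternatingWord]
  | succ p ih =>
    rw [show 2 * (p + 1) = 2 * p + 1 + 1 by ring, pow_succ', ← ih]
    simp [alternatingWord, mul_assoc]

section ReflectionRepresentation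

variable [DecidableEq W]

def simpleReflPerm (i : B) : Equiv.Perm (W × ZMod 2) :=
  Function.Involutive.toPerm
    (fun p => (cs.simple i * p.1 * cs.simple i, p.2 + if p.1 = cs.simple i then 1 else 0))
    (by
      rintro ⟨t, a⟩
      simp only [simple_mul_mul_simple_eq_simple_iff]
      simp [mul_assoc, add_assoc, CharTwo.add_self_eq_zero])

theorem simpleReflPerm_apply (i : B) (t : W) (a : ZMod 2) :
    cs.simpleReflPerm i (t, a) =
      (cs.simple i * t * cs.simple i, a + if t = cs.simple i then 1 else 0) :=
  rfl

theorem prod_reverse_map_simpleReflPerm_apply (ω : List B) (t : W) (a : ZMod 2) :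
    (ω.map cs.simpleReflPerm).reverse.prod (t, a) =
      ((π ω)⁻¹ * t * π ω, a + (lis ω).count t) := by
  induction ω generalizing t a with
  | nil => simp
  | cons i ω ih =>
    rw [map_cons, reverse_cons, prod_append, prod_singleton, Equiv.Perm.mul_apply]
    simp only [simpleReflPerm_apply, ih, wordProd_cons, leftInvSeq,
      count_cons, count_map_conj, inv_simple, mul_inv_rev, beq_iff_eq, Prod.mk.injEq]
    refine ⟨by group, ?_⟩
    simp only [eq_comm (a := cs.simple i)]
    push_cast
    ring

theorem isLiftable_simpleReflPerm : M.IsLiftable cs.simpleReflPerm := by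
  intro i j
  ext1 ⟨t, a⟩
  have hπ : π (alternatingWord j i (2 * M i j)) = 1 := by
    rw [prod_alternatingWord_eq_mul_pow]
    simp
  have hcount : ((lis (alternatingWord j i (2 * M i j))).count t : ZMod 2) = 0 := by
    -- the left inversion sequence of the braid word has period `M i j`
    rw [leftInvSeq_alternatingWord_two_mul, two_mul, range_add, map_append, map_map]
    have hper : ((fun k => cs.simple j * (cs.simple i * cs.simple j) ^ k) ∘ (M i j + ·)) =
        fun k => cs.simple j * (cs.simple i * cs.simple j) ^ k := by
      ext k
      simp [pow_add]
    rw [hper, count_append, ← two_mul]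
    push_cast
    exact mul_eq_zero_of_left (by decide) _
  rw [← reverse_map_alternatingWord_two_mul_prod, prod_reverse_map_simpleReflPerm_apply, hπ,
    hcount]
  simp

def reflParityRep : W →* Equiv.Perm (W × ZMod 2) :=
  cs.lift ⟨cs.simpleReflPerm, cs.isLiftable_simpleReflPerm⟩

theorem reflParityRep_wordProd_inv_apply (ω : List B) (t : W) (a : ZMod 2) :
    cs.reflParityRep (π ω)⁻¹ (t, a) = ((π ω)⁻¹ * t * π ω, a + (lis ω).count t) := by
  have hrep : cs.reflParityRep (π ω)⁻¹ = (ω.map cs.simpleReflPerm).reverse.prod := by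
    rw [← wordProd_reverse, wordProd, map_list_prod, map_map, reflParityRep, map_reverse]
    simp only [Function.comp_def, lift_apply_simple]
  rw [hrep, prod_reverse_map_simpleReflPerm_apply]

theorem count_leftInvSeq_cast_eq_of_wordProd_eq {ω ω' : List B} (h : π ω = π ω') (t : W) :
    ((lis ω).count t : ZMod 2) = (lis ω').count t := by
  have := congrArg (fun w => (cs.reflParityRep w⁻¹ (t, 0)).2) h
  simpa only [reflParityRep_wordProd_inv_apply, zero_add] using this

end ReflectionRepresentation

theorem simple_mem_leftInvSeq_of_isLeftDescent {ω : List B} {i : B}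
    (h : cs.IsLeftDescent (π ω) i) : cs.simple i ∈ lis ω := by
  classical
  obtain ⟨ω', hred, hω'⟩ := cs.exists_isReduced (cs.simple i * π ω)
  have hprod : π (i :: ω') = π ω := by
    rw [wordProd_cons, ← hω', simple_mul_simple_cancel_left]
  have hred' : cs.IsReduced (i :: ω') := by
    have := cs.length_simple_mul (π ω) i
    rw [IsReduced, hprod, length_cons, ← hred.eq, ← hω']
    unfold IsLeftDescent at h
    omega
  have hcount : (lis (i :: ω')).count (cs.simple i) = 1 :=
    count_eq_one_of_mem hred'.nodup_leftInvSeq mem_cons_self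
  have hodd := cs.count_leftInvSeq_cast_eq_of_wordProd_eq hprod (cs.simple i)
  rw [hcount] at hodd
  refine count_pos_iff.mp (Nat.pos_of_ne_zero fun h0 => ?_)
  rw [h0] at hodd
  exact absurd hodd (by decide)

theorem exists_wordProd_eraseIdx_eq_simple_mul {ω : List B} {i : B}
    (h : cs.IsLeftDescent (π ω) i) :
    ∃ k < ω.length, π (ω.eraseIdx k) = cs.simple i * π ω := by
  obtain ⟨k, hk, hget⟩ := getElem_of_mem (cs.simple_mem_leftInvSeq_of_isLeftDescent h)
  refine ⟨k, by simpa using hk, ?_⟩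
  rw [← getD_leftInvSeq_mul_wordProd, getD_eq_getElem _ _ hk, hget]

theorem exists_isReduced_sublist_wordProd_eq (ω : List B) :
    ∃ ω', ω' <+ ω ∧ cs.IsReduced ω' ∧ π ω' = π ω := by
  induction ω with
  | nil => exact ⟨[], Sublist.slnil, by simp [IsReduced], rfl⟩
  | cons i ω ih =>
    obtain ⟨ω₀, hsub, hred, hprod⟩ := ih
    rcases cs.length_simple_mul (π ω₀) i with hlong | hshort
    · refine ⟨i :: ω₀, hsub.cons_cons i, ?_, by rw [wordProd_cons, wordProd_cons, hprod]⟩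
      rw [IsReduced, wordProd_cons, hlong, hred.eq, length_cons]
    · obtain ⟨k, hk, hk'⟩ :=
        cs.exists_wordProd_eraseIdx_eq_simple_mul (show cs.IsLeftDescent (π ω₀) i by
          unfold IsLeftDescent; omega)
      refine ⟨ω₀.eraseIdx k, ((eraseIdx_sublist _ _).trans hsub).cons i, ?_, ?_⟩
      · rw [IsReduced, hk', length_eraseIdx_of_lt hk, ← hred.eq]
        omega
      · rw [hk', hprod, wordProd_cons]

theorem IsReduced.isRightDescent_append_singleton {ω : List B} {j : B}
    (h : cs.IsReduced (ω ++ [j])) : cs.IsRightDescent (π (ω ++ [j])) j := by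
  have hle := cs.length_wordProd_le ω
  rw [IsRightDescent, h.eq, wordProd_append, wordProd_singleton, simple_mul_simple_cancel_right,
    length_append, length_singleton]
  omega

theorem mem_closure_simple_image_iff (J : Set B) (v : W) :
    v ∈ Subgroup.closure (cs.simple '' J) ↔
      ∃ ω : List B, (∀ j ∈ ω, j ∈ J) ∧ π ω = v := by
  constructor
  · intro hv
    induction hv using Subgroup.closure_induction with
    | mem x hx =>
      obtain ⟨j, hj, rfl⟩ := hx
      exact ⟨[j], by simpa using hj, wordProd_singleton cs j⟩
    | one => exact ⟨[], by simp, wordProd_nil cs⟩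
    | mul x y _ _ hx hy =>
      obtain ⟨ω₁, h₁, rfl⟩ := hx
      obtain ⟨ω₂, h₂, rfl⟩ := hy
      exact ⟨ω₁ ++ ω₂, by simpa [or_imp, forall_and] using ⟨h₁, h₂⟩,
        wordProd_append cs ω₁ ω₂⟩
    | inv x _ hx =>
      obtain ⟨ω, h, rfl⟩ := hx
      exact ⟨ω.reverse, by simpa using h, wordProd_reverse cs ω⟩
  · rintro ⟨ω, hω, rfl⟩
    exact Subgroup.list_prod_mem _ fun x hx => by
      obtain ⟨j, hj, rfl⟩ := mem_map.mp hx
      exact Subgroup.subset_closure ⟨j, hω j hj, rfl⟩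

section MinCount

variable [DecidableEq B]

noncomputable def minCount (i : B) (w : W) : ℕ :=
  sInf {c | ∃ l : List B, cs.IsReduced l ∧ π l = w ∧ l.count i = c}

theorem exists_isReduced_count_eq_minCount (i : B) (w : W) :
    ∃ l : List B, cs.IsReduced l ∧ π l = w ∧ l.count i = cs.minCount i w := by
  obtain ⟨l, hred, hl⟩ := cs.exists_isReduced w
  exact Nat.sInf_mem (s := {c | ∃ l : List B, cs.IsReduced l ∧ π l = w ∧ l.count i = c})
    ⟨l.count i, l, hred, hl.symm, rfl⟩

theorem minCount_wordProd_le_count (i : B) (ω : List B) :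
    cs.minCount i (π ω) ≤ ω.count i := by
  obtain ⟨ω', hsub, hred, hprod⟩ := cs.exists_isReduced_sublist_wordProd_eq ω
  rw [← hprod]
  exact (Nat.sInf_le (s := {c | ∃ l : List B, cs.IsReduced l ∧ π l = π ω' ∧ l.count i = c})
    ⟨ω', hred, rfl, rfl⟩).trans (hsub.count_le i)

theorem minCount_one (i : B) : cs.minCount i 1 = 0 :=
  Nat.le_zero.mp (by simpa using cs.minCount_wordProd_le_count i [])

theorem minCount_simple_le (i : B) : cs.minCount i (cs.simple i) ≤ 1 := by
  simpa using cs.minCount_wordProd_le_count i [i]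

theorem minCount_mul_le (i : B) (u v : W) :
    cs.minCount i (u * v) ≤ cs.minCount i u + cs.minCount i v := by
  obtain ⟨ω, -, rfl, hω⟩ := cs.exists_isReduced_count_eq_minCount i u
  obtain ⟨ω', -, rfl, hω'⟩ := cs.exists_isReduced_count_eq_minCount i v
  rw [← hω, ← hω', ← count_append, ← wordProd_append]
  exact cs.minCount_wordProd_le_count i _

theorem minCount_eq_zero_iff_mem_closure {i : B} {v : W} :
    cs.minCount i v = 0 ↔ v ∈ Subgroup.closure (cs.simple '' {j | j ≠ i}) := by
  rw [mem_closure_simple_image_iff]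
  constructor
  · intro h
    obtain ⟨ω, -, hω, hcount⟩ := cs.exists_isReduced_count_eq_minCount i v
    rw [h, count_eq_zero] at hcount
    exact ⟨ω, fun j hj hji => hcount (hji ▸ hj), hω⟩
  · rintro ⟨ω, hω, rfl⟩
    exact Nat.le_zero.mp ((cs.minCount_wordProd_le_count i ω).trans_eq
      (count_eq_zero.mpr fun hi => hω i hi rfl))

theorem minCount_mul_of_mem_closure (i : B) (u : W) {v : W}
    (hv : v ∈ Subgroup.closure (cs.simple '' {j | j ≠ i})) :
    cs.minCount i (u * v) = cs.minCount i u := by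
  have hv' := cs.minCount_eq_zero_iff_mem_closure.mpr hv
  have hvinv := cs.minCount_eq_zero_iff_mem_closure.mpr (Subgroup.inv_mem _ hv)
  refine le_antisymm ((cs.minCount_mul_le i u v).trans_eq (by rw [hv', add_zero])) ?_
  calc cs.minCount i u = cs.minCount i (u * v * v⁻¹) := by rw [mul_inv_cancel_right]
    _ ≤ cs.minCount i (u * v) := (cs.minCount_mul_le i _ _).trans_eq (by rw [hvinv, add_zero])

theorem minCount_mul_simple_add_one {i : B} {x : W} (hx : x ≠ 1)
    (hdesc : ∀ j, cs.IsRightDescent x j → j = i) :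
    cs.minCount i (x * cs.simple i) + 1 = cs.minCount i x := by
  refine le_antisymm ?_ ?_
  · obtain ⟨ω, hred, rfl, hω⟩ := cs.exists_isReduced_count_eq_minCount i x
    obtain rfl | ⟨ω', j, rfl⟩ := ω.eq_nil_or_concat'
    · exact absurd (wordProd_nil cs) hx
    obtain rfl : i = j := (hdesc j hred.isRightDescent_append_singleton).symm
    rw [← hω, count_append, count_singleton_self, wordProd_append, wordProd_singleton,
      simple_mul_simple_cancel_right]
    exact Nat.add_le_add_right (cs.minCount_wordProd_le_count i ω') 1
  · calc cs.minCount i x = cs.minCount i (x * cs.simple i * cs.simple i) := by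
          rw [simple_mul_simple_cancel_right]
      _ ≤ cs.minCount i (x * cs.simple i) + 1 :=
          (cs.minCount_mul_le i _ _).trans (Nat.add_le_add_left (cs.minCount_simple_le i) _)

end MinCount

end CoxeterSystem

namespace IsMinCosetRep

variable {B : Type*} {W : Type*} [Group W] {M : CoxeterMatrix B} {cs : CoxeterSystem M W}
  {i : B} {w u : W}

theorem minCount_eq [DecidableEq B] (h : IsMinCosetRep cs i w u) :
    cs.minCount i u = cs.minCount i w := by
  obtain ⟨⟨v, hv, rfl⟩, -⟩ := h
  exact cs.minCount_mul_of_mem_closure i w hv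

theorem not_isRightDescent (h : IsMinCosetRep cs i w u) {j : B} (hj : j ≠ i) :
    ¬ cs.IsRightDescent u j := by
  obtain ⟨⟨v, hv, rfl⟩, hmin⟩ := h
  have hsj : cs.simple j ∈ Subgroup.closure (cs.simple '' {j | j ≠ i}) :=
    Subgroup.subset_closure ⟨j, hj, rfl⟩
  have hle :=
    hmin (w * v * cs.simple j) ⟨v * cs.simple j, Subgroup.mul_mem _ hv hsj, mul_assoc ..⟩
  exact hle.not_gt

theorem eq_one_of_minCount_eq_zero [DecidableEq B] (h : IsMinCosetRep cs i w u)
    (h0 : cs.minCount i u = 0) : u = 1 := by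
  obtain ⟨⟨v, hv, rfl⟩, hmin⟩ := h
  have hu := cs.minCount_eq_zero_iff_mem_closure.mp h0
  have hle := hmin 1 ⟨v * (w * v)⁻¹, Subgroup.mul_mem _ hv (Subgroup.inv_mem _ hu), by group⟩
  rw [cs.length_one, Nat.le_zero] at hle
  exact cs.length_eq_zero_iff.mp hle

theorem minCount_add_one_of_mul_simple [DecidableEq B] {u' : W} (h : IsMinCosetRep cs i w u)
    (hu : u ≠ 1) (h' : IsMinCosetRep cs i (u * cs.simple i) u') :
    cs.minCount i u' + 1 = cs.minCount i u := by
  rw [h'.minCount_eq]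
  exact cs.minCount_mul_simple_add_one hu fun j hj =>
    by_contra fun hji => h.not_isRightDescent hji hj

end IsMinCosetRep

theorem stmt18_general {B : Type*} [DecidableEq B] {W : Type*} [Group W]
    {M : CoxeterMatrix B} (cs : CoxeterSystem M W) (i : B) (w : W)
    (f : ℕ → W) (h0 : IsMinCosetRep cs i w (f 0))
    (hstep : ∀ k, f k ≠ 1 → IsMinCosetRep cs i (f k * cs.simple i) (f (k + 1))) :
    sInf {c | ∃ l : List B, cs.IsReduced l ∧ cs.wordProd l = w ∧ l.count i = c} =
      sInf {k | f k = 1} := by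
  change cs.minCount i w = _
  have hchain : ∀ k ≤ cs.minCount i w,
      (∃ g, IsMinCosetRep cs i g (f k)) ∧ cs.minCount i (f k) + k = cs.minCount i w := by
    intro k
    induction k with
    | zero => exact fun _ => ⟨⟨w, h0⟩, h0.minCount_eq⟩
    | succ k ih =>
      intro hk
      obtain ⟨⟨g, hg⟩, hcount⟩ := ih (by omega)
      have hfk : f k ≠ 1 := fun h1 => by rw [h1, cs.minCount_one] at hcount; omega
      have hdrop := hg.minCount_add_one_of_mul_simple hfk (hstep k hfk)
      exact ⟨⟨_, hstep k hfk⟩, by omega⟩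
  obtain ⟨⟨g, hg⟩, hcount⟩ := hchain _ le_rfl
  have hfm : f (cs.minCount i w) = 1 := hg.eq_one_of_minCount_eq_zero (by omega)
  refine le_antisymm (le_csInf ⟨_, hfm⟩ fun k hk => ?_) (Nat.sInf_le hfm)
  by_contra hlt
  have hcount_k := (hchain k (by omega)).2
  rw [show f k = 1 from hk, cs.minCount_one] at hcount_k
  omega

/-- For a finite Coxeter group, the minimum number of occurrences of `sᵢ` among reduced
words of `w` equals the number of steps of the algorithm
`w⁽⁰⁾ = w^{Jᵢ}`, `w⁽ᵏ⁺¹⁾ = (w⁽ᵏ⁾ sᵢ)^{Jᵢ}` (while `w⁽ᵏ⁾ ≠ 1`) to reach the identity. -/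
theorem stmt18 {B : Type*} [DecidableEq B] {W : Type*} [Group W] [Finite W]
    {M : CoxeterMatrix B} (cs : CoxeterSystem M W) (i : B) (w : W)
    (f : ℕ → W) (h0 : IsMinCosetRep cs i w (f 0))
    (hstep : ∀ k, f k ≠ 1 → IsMinCosetRep cs i (f k * cs.simple i) (f (k + 1)))
    (hstop : ∀ k, f k = 1 → f (k + 1) = 1) :
    sInf {c | ∃ l : List B, cs.IsReduced l ∧ cs.wordProd l = w ∧ l.count i = c} =
      sInf {k | f k = 1} :=
  stmt18_general cs i w f h0 hstep
end
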